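/- arXiv:2601.18175 — 5 statements merged into one kernel-verified Lean document; each statement's English description precedes it below -/
import Mathlib

section
/- For every time t ≥ 0, every nonterminal state s, and every action a, if ℙ_{π0,μ}(Xₜ = s and ∃ u, X_u ∈ 𝒯₊) > 0, then the conditional probability satisfies ℙ_{π0,μ}(Aₜ = a | Xₜ = s and ∃ u, X_u ∈ 𝒯₊) = π0(a|s)·Q_{π0}(s,a)/V_{π0}(s) = π₊(a|s). In particular the success-conditioned action distribution at state s does not depend on t or on μ. -/
open MeasureTheory
open scoped ENNReal

/-- A pmf on a finite type, as a real-valued function. -/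
def IsPMFOn {α : Type*} [Fintype α] (p : α → ℝ) : Prop :=
  (∀ x, 0 ≤ p x) ∧ ∑ x, p x = 1

/-- A terminated trajectory of an episodic MDP: the initial state together with the
list of (action, next-state) steps, recorded up to the first visit to a terminal
state.  Under almost-sure termination this is a faithful (countable) sample space
for the Ionescu–Tulcea law of the chain, terminal states being absorbing. -/
structure Traj (S A : Type*) where
  init : S
  steps : List (A × S)

instance {S A : Type*} : MeasurableSpace (Traj S A) := ⊤

variable {S A : Type*}

/-- The last recorded state of a trajectory. -/
def lastState (ω : Traj S A) : S := ω.steps.foldl (fun _ p => p.2) ω.init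

/-- The state `Xₜ` at time `t` (after termination the chain is absorbed, so we
return the last recorded state). -/
def stateAt (ω : Traj S A) (t : ℕ) : S :=
  (ω.init :: ω.steps.map Prod.snd).getD t (lastState ω)

/-- The action `Aₜ` at time `t`, defined (as `some a`) for `t` before the
termination time. -/
def actionAt (ω : Traj S A) (t : ℕ) : Option A := ω.steps[t]?.map Prod.fst

/-- Probability weight of a path started at `s`: the product of the policy and
transition probabilities along the path, the path being required to stop exactly
on first reaching the terminal set `Term`. -/
def pathWeight [DecidableEq S] (Term : Finset S) (P : S → A → S → ℝ)
    (π : S → A → ℝ) : S → List (A × S) → ℝ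
  | s, [] => if s ∈ Term then 1 else 0
  | s, (a, s') :: l =>
      if s ∈ Term then 0 else π s a * P s a s' * pathWeight Term P π s' l

/-- The law `ℙ_{π,μ}` of the episodic chain `X₀ ~ μ, Aₜ ~ π(·|Xₜ),
X_{t+1} ~ P(·|Xₜ,Aₜ)` with terminal set `Term`, as a measure on terminated
trajectories.  When the chain reaches `Term` almost surely this is a probability
measure and is the (pushforward of the) Ionescu–Tulcea trajectory law. -/
noncomputable def trajMeasure [DecidableEq S] (Term : Finset S) (P : S → A → S → ℝ)
    (π : S → A → ℝ) (μ : S → ℝ) : Measure (Traj S A) :=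
  Measure.sum fun ω : Traj S A =>
    ENNReal.ofReal (μ ω.init * pathWeight Term P π ω.init ω.steps) • Measure.dirac ω

/-- The success event `{∃ t, Xₜ ∈ 𝒯₊}`. -/
def SuccessEvent (Tp : Finset S) : Set (Traj S A) := {ω | ∃ t, stateAt ω t ∈ Tp}

/-- The point mass at `s`, as an initial distribution. -/
def pointMass [DecidableEq S] (s : S) : S → ℝ := fun s' => if s' = s then 1 else 0

/-- The value `V_π(s) := ℙ_{π,s}(∃ t, Xₜ ∈ 𝒯₊)`. -/
noncomputable def Vval [DecidableEq S] (Term Tp : Finset S) (P : S → A → S → ℝ)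
    (π : S → A → ℝ) (s : S) : ℝ :=
  (trajMeasure Term P π (pointMass s) (SuccessEvent Tp)).toReal

/-- The Q-value `Q_π(s,a) := Σ_{s'} P(s'|s,a)·V_π(s')`. -/
noncomputable def Qval [Fintype S] [DecidableEq S] (Term Tp : Finset S)
    (P : S → A → S → ℝ) (π : S → A → ℝ) (s : S) (a : A) : ℝ :=
  ∑ s', P s a s' * Vval Term Tp P π s'

/-- The success-conditioned policy `π₊(a|s) := π0(a|s)·Q_{π0}(s,a)/V_{π0}(s)`. -/
noncomputable def piPlus [Fintype S] [DecidableEq S] (Term Tp : Finset S)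
    (P : S → A → S → ℝ) (π0 : S → A → ℝ) : S → A → ℝ :=
  fun s a => π0 s a * Qval Term Tp P π0 s a / Vval Term Tp P π0 s

/-- The action-influence
`I(s) := Σ_a π0(a|s)·((Q_{π0}(s,a) − V_{π0}(s))/V_{π0}(s))²`. -/
noncomputable def influence [Fintype S] [DecidableEq S] [Fintype A] (Term Tp : Finset S)
    (P : S → A → S → ℝ) (π0 : S → A → ℝ) (s : S) : ℝ :=
  ∑ a, π0 s a * ((Qval Term Tp P π0 s a - Vval Term Tp P π0 s)
      / Vval Term Tp P π0 s) ^ 2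

/-- The occupancy measure `d_π(s) := Σ_{t≥0} ℙ_{π,μ}(Xₜ = s)` (in `ℝ≥0∞`). -/
noncomputable def dOcc [DecidableEq S] (Term : Finset S) (P : S → A → S → ℝ)
    (π : S → A → ℝ) (μ : S → ℝ) (s : S) : ℝ≥0∞ :=
  ∑' t : ℕ, trajMeasure Term P π μ {ω | stateAt ω t = s}

/-- The success-conditioned occupancy
`d⁺_π(s) := 𝔼_{π,μ}[Σ_{t≥0} 1(Xₜ = s) | ∃ t, Xₜ ∈ 𝒯₊]` (in `ℝ≥0∞`). -/
noncomputable def dPlusOcc [DecidableEq S] (Term Tp : Finset S) (P : S → A → S → ℝ)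
    (π : S → A → ℝ) (μ : S → ℝ) (s : S) : ℝ≥0∞ :=
  ∫⁻ ω, (∑' t : ℕ, if stateAt ω t = s then 1 else 0)
    ∂ (ProbabilityTheory.cond (trajMeasure Term P π μ) (SuccessEvent Tp))

/-- Log-likelihood `Σ_{t<T} log π(Aₜ|Xₜ)` of the recorded path under policy `π`. -/
noncomputable def pathLogLik (π : S → A → ℝ) : S → List (A × S) → ℝ
  | _, [] => 0
  | s, (a, s') :: l => Real.log (π s a) + pathLogLik π s' l

/-- The cross-entropy loss
`ℓ(π) := 𝔼_{π0,μ}[ −Σ_{t<T} log π(Aₜ|Xₜ) | ∃ t, Xₜ ∈ 𝒯₊ ]`. -/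
noncomputable def xent [DecidableEq S] (Term Tp : Finset S) (P : S → A → S → ℝ)
    (π0 : S → A → ℝ) (μ : S → ℝ) (π : S → A → ℝ) : ℝ :=
  ∫ ω, -(pathLogLik π ω.init ω.steps)
    ∂ (ProbabilityTheory.cond (trajMeasure Term P π0 μ) (SuccessEvent Tp))

/-!
By the Markov property at time `t`, the mass of `{Xₜ = s, success, Aₜ = a}` factors as
(mass of the prefixes reaching `s` at time `t`) × (mass of the successful paths from `s` that
start with `a`), and that of `{Xₜ = s, success}` as the same prefix factor times `V_{π0}(s)`.
The prefix factor cancels, and one step from `s` turns the second factor into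
`π0(a|s) · Q_{π0}(s,a)`.
-/

namespace Traj

def cons (s₀ : S) (b : A) (ω : Traj S A) : Traj S A := ⟨s₀, (b, ω.init) :: ω.steps⟩

end Traj

lemma stateAt_nil (s₀ : S) (t : ℕ) : stateAt (⟨s₀, []⟩ : Traj S A) t = s₀ := by
  cases t <;> rfl

@[simp] lemma stateAt_cons_zero (s₀ : S) (b : A) (ω : Traj S A) :
    stateAt (ω.cons s₀ b) 0 = s₀ := rfl

@[simp] lemma stateAt_cons_succ (s₀ : S) (b : A) (ω : Traj S A) (t : ℕ) :
    stateAt (ω.cons s₀ b) (t + 1) = stateAt ω t := by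
  simp [stateAt, lastState, Traj.cons]

@[simp] lemma actionAt_cons_zero (s₀ : S) (b : A) (ω : Traj S A) :
    actionAt (ω.cons s₀ b) 0 = some b := rfl

@[simp] lemma actionAt_cons_succ (s₀ : S) (b : A) (ω : Traj S A) (t : ℕ) :
    actionAt (ω.cons s₀ b) (t + 1) = actionAt ω t := by
  simp [actionAt, Traj.cons]

lemma preimage_cons_successEvent {Tp : Finset S} {s₀ : S} (h : s₀ ∉ Tp) (b : A) :
    Traj.cons s₀ b ⁻¹' SuccessEvent Tp = SuccessEvent Tp := by
  ext ω
  constructor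
  · rintro ⟨_ | u, hu⟩
    · exact absurd hu h
    · exact ⟨u, by simpa using hu⟩
  · rintro ⟨u, hu⟩
    exact ⟨u + 1, by simpa using hu⟩

lemma preimage_cons_stateAt_inter_successEvent {Tp : Finset S} {s₀ : S} (h : s₀ ∉ Tp) (b : A)
    (s : S) (t : ℕ) :
    Traj.cons s₀ b ⁻¹' ({ω | stateAt ω (t + 1) = s} ∩ SuccessEvent Tp) =
      {ω | stateAt ω t = s} ∩ SuccessEvent Tp := by
  simp only [Set.preimage_inter, preimage_cons_successEvent h, Set.preimage_ofPred_eq,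
    stateAt_cons_succ]

lemma ENNReal.tsum_list_eq_nil_add_cons {α : Type*} (f : List α → ℝ≥0∞) :
    ∑' l, f l = f [] + ∑' p : α × List α, f (p.1 :: p.2) := by
  have hcons : Function.Injective fun p : α × List α => p.1 :: p.2 :=
    fun p q h => Prod.ext (List.cons.inj h).1 (List.cons.inj h).2
  rw [ENNReal.tsum_eq_add_tsum_ite [], ← hcons.tsum_eq]
  · simp
  · rintro (_ | ⟨x, l⟩) hl
    · simp at hl
    · exact ⟨(x, l), rfl⟩

section PathMass

variable [DecidableEq S] (T : Finset S) (P : S → A → S → ℝ) (π : S → A → ℝ)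

noncomputable def pathMass (s₀ : S) (E : Set (Traj S A)) : ℝ≥0∞ :=
  ∑' l : List (A × S),
    E.indicator (fun ω => ENNReal.ofReal (pathWeight T P π ω.init ω.steps)) ⟨s₀, l⟩

lemma pathMass_of_mem {s₀ : S} (h : s₀ ∈ T) (E : Set (Traj S A)) :
    pathMass T P π s₀ E = E.indicator 1 ⟨s₀, []⟩ := by
  rw [pathMass, ENNReal.tsum_list_eq_nil_add_cons]
  simp [Set.indicator, pathWeight, h]

lemma pathMass_congr {s₀ : S} {E F : Set (Traj S A)}
    (h : ∀ l, (⟨s₀, l⟩ : Traj S A) ∈ E ↔ (⟨s₀, l⟩ : Traj S A) ∈ F) :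
    pathMass T P π s₀ E = pathMass T P π s₀ F := by
  classical
  simp only [pathMass, Set.indicator_apply, h]

lemma pathMass_of_forall_not_mem {s₀ : S} {E : Set (Traj S A)}
    (h : ∀ l, (⟨s₀, l⟩ : Traj S A) ∉ E) : pathMass T P π s₀ E = 0 := by
  simp [pathMass, Set.indicator_of_notMem (h _)]

lemma pathMass_stateAt_zero_inter (s : S) (E : Set (Traj S A)) :
    pathMass T P π s ({ω | stateAt ω 0 = s} ∩ E) = pathMass T P π s E :=
  pathMass_congr T P π fun _ => and_iff_right rfl

variable [Fintype S]

lemma trajMeasure_apply {μ : S → ℝ} (hμ : ∀ s, 0 ≤ μ s) (E : Set (Traj S A)) :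
    trajMeasure T P π μ E = ∑ s₀, ENNReal.ofReal (μ s₀) * pathMass T P π s₀ E := by
  let e : S × List (A × S) ≃ Traj S A :=
    ⟨fun p => ⟨p.1, p.2⟩, fun ω => (ω.init, ω.steps), fun _ => rfl, fun _ => rfl⟩
  rw [trajMeasure, Measure.sum_apply _ (by trivial), ← e.tsum_eq, ENNReal.tsum_prod', tsum_fintype]
  refine Finset.sum_congr rfl fun s₀ _ => ?_
  rw [pathMass, ← ENNReal.tsum_mul_left]
  refine tsum_congr fun l => ?_
  simp [e, Set.indicator, ENNReal.ofReal_mul (hμ s₀)]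

lemma trajMeasure_pointMass (s : S) (E : Set (Traj S A)) :
    trajMeasure T P π (pointMass s) E = pathMass T P π s E := by
  rw [trajMeasure_apply T P π (fun _ => by unfold pointMass; split <;> norm_num)]
  simp [pointMass, apply_ite ENNReal.ofReal, ite_mul]

lemma ofReal_Vval {Tp : Finset S} {s : S} (h : pathMass T P π s (SuccessEvent Tp) ≠ ⊤) :
    ENNReal.ofReal (Vval T Tp P π s) = pathMass T P π s (SuccessEvent Tp) := by
  rw [Vval, trajMeasure_pointMass, ENNReal.ofReal_toReal h]

lemma ofReal_Qval {Tp : Finset S} {s : S} {a : A} (hP : ∀ s', 0 ≤ P s a s')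
    (h : ∀ s', pathMass T P π s' (SuccessEvent Tp) ≠ ⊤) :
    ENNReal.ofReal (Qval T Tp P π s a) =
      ∑ s', ENNReal.ofReal (P s a s') * pathMass T P π s' (SuccessEvent Tp) := by
  rw [Qval, ENNReal.ofReal_sum_of_nonneg (f := fun s' => P s a s' * Vval T Tp P π s')
    fun s' _ => mul_nonneg (hP s') ENNReal.toReal_nonneg]
  simp only [ENNReal.ofReal_mul (hP _), ofReal_Vval T P π (h _)]

lemma pathMass_successEvent_ne_top {Tp : Finset S} (hV : ∀ s ∉ T, 0 < Vval T Tp P π s) (s : S) :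
    pathMass T P π s (SuccessEvent Tp) ≠ ⊤ := by
  by_cases h : s ∈ T
  · classical
    rw [pathMass_of_mem T P π h, Set.indicator_apply]
    split <;> simp
  · have := hV s h
    rw [Vval, trajMeasure_pointMass, ENNReal.toReal_pos_iff] at this
    exact this.2.ne

variable [Fintype A]

lemma pathMass_of_notMem {s₀ : S} (h : s₀ ∉ T) (hw : ∀ b s', 0 ≤ π s₀ b * P s₀ b s')
    (E : Set (Traj S A)) :
    pathMass T P π s₀ E = ∑ b, ∑ s', ENNReal.ofReal (π s₀ b * P s₀ b s') *
      pathMass T P π s' (Traj.cons s₀ b ⁻¹' E) := by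
  rw [pathMass, ENNReal.tsum_list_eq_nil_add_cons, ENNReal.tsum_prod', tsum_fintype,
    Fintype.sum_prod_type]
  classical
  simp only [pathMass, ← ENNReal.tsum_mul_left]
  simp [Set.indicator_apply, pathWeight, h, Traj.cons, ENNReal.ofReal_mul (hw _ _)]

/-- The mass of the length-`t` path prefixes from `s₀` to `s` that avoid `T` before time `t`. -/
noncomputable def reachMass (s : S) : ℕ → S → ℝ≥0∞
  | 0, s₀ => if s₀ = s then 1 else 0
  | t + 1, s₀ => if s₀ ∈ T then 0 else
      ∑ b, ∑ s', ENNReal.ofReal (π s₀ b * P s₀ b s') * reachMass s t s'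

lemma reachMass_ne_top (s : S) (t : ℕ) (s₀ : S) : reachMass T P π s t s₀ ≠ ⊤ := by
  induction t generalizing s₀ with
  | zero => unfold reachMass; split <;> simp
  | succ t ih =>
    unfold reachMass
    split
    · simp
    · exact ENNReal.sum_ne_top.mpr fun b _ => ENNReal.sum_ne_top.mpr fun s' _ =>
        ENNReal.mul_ne_top ENNReal.ofReal_ne_top (ih s')

/-- Markov property at time `t`. -/
lemma pathMass_eq_reachMass_mul {s : S} (hs : s ∉ T)
    (hw : ∀ s₀ ∉ T, ∀ b s', 0 ≤ π s₀ b * P s₀ b s')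
    (F : ℕ → Set (Traj S A)) (hF : ∀ t, F t ⊆ {ω | stateAt ω t = s})
    (hF_cons : ∀ t, ∀ s₀ ∉ T, ∀ b, Traj.cons s₀ b ⁻¹' F (t + 1) = F t) (t : ℕ) (s₀ : S) :
    pathMass T P π s₀ (F t) = reachMass T P π s t s₀ * pathMass T P π s (F 0) := by
  induction t generalizing s₀ with
  | zero =>
    by_cases h : s₀ = s
    · simp [reachMass, h]
    · simp only [reachMass, if_neg h, zero_mul]
      exact pathMass_of_forall_not_mem T P π fun l hl => h (hF 0 hl)
  | succ t ih =>
    by_cases h : s₀ ∈ T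
    · have hnil : (⟨s₀, []⟩ : Traj S A) ∉ F (t + 1) := fun hl =>
        hs ((stateAt_nil s₀ (t + 1)).symm.trans (hF (t + 1) hl) ▸ h)
      simp [pathMass_of_mem T P π h, reachMass, h, hnil]
    · simp only [pathMass_of_notMem T P π h (hw s₀ h), hF_cons t s₀ h, ih, reachMass, if_neg h,
        Finset.sum_mul, mul_assoc]

lemma trajMeasure_eq_reachMass_mul {μ : S → ℝ} (hμ : ∀ s, 0 ≤ μ s) {s : S} (hs : s ∉ T)
    (hw : ∀ s₀ ∉ T, ∀ b s', 0 ≤ π s₀ b * P s₀ b s')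
    (F : ℕ → Set (Traj S A)) (hF : ∀ t, F t ⊆ {ω | stateAt ω t = s})
    (hF_cons : ∀ t, ∀ s₀ ∉ T, ∀ b, Traj.cons s₀ b ⁻¹' F (t + 1) = F t) (t : ℕ) :
    trajMeasure T P π μ (F t) =
      (∑ s₀, ENNReal.ofReal (μ s₀) * reachMass T P π s t s₀) * pathMass T P π s (F 0) := by
  rw [trajMeasure_apply T P π hμ, Finset.sum_mul]
  refine Finset.sum_congr rfl fun s₀ _ => ?_
  rw [pathMass_eq_reachMass_mul T P π hs hw F hF hF_cons, mul_assoc]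

lemma pathMass_inter_actionAt_zero {s : S} (hs : s ∉ T) (hw : ∀ b s', 0 ≤ π s b * P s b s')
    (E : Set (Traj S A)) {a : A} (ha : 0 ≤ π s a) :
    pathMass T P π s (E ∩ {ω | actionAt ω 0 = some a}) =
      ENNReal.ofReal (π s a) * ∑ s', ENNReal.ofReal (P s a s') *
        pathMass T P π s' (Traj.cons s a ⁻¹' E) := by
  rw [pathMass_of_notMem T P π hs hw, Finset.sum_eq_single a]
  · simp only [Set.preimage_inter, Set.preimage_ofPred_eq, actionAt_cons_zero, Set.ofPred_true,
      Set.inter_univ, Finset.mul_sum, ENNReal.ofReal_mul ha, mul_assoc]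
  · intro b _ hb
    refine Finset.sum_eq_zero fun s' _ => ?_
    rw [pathMass_of_forall_not_mem T P π fun l hl => hb (Option.some_injective _ hl.2), mul_zero]
  · simp

lemma trajMeasure_stateAt_inter_successEvent {μ : S → ℝ} (hμ : ∀ s, 0 ≤ μ s) {Tp : Finset S}
    (hTp : Tp ⊆ T) {s : S} (hs : s ∉ T) (hw : ∀ s₀ ∉ T, ∀ b s', 0 ≤ π s₀ b * P s₀ b s')
    (t : ℕ) :
    trajMeasure T P π μ ({ω | stateAt ω t = s} ∩ SuccessEvent Tp) =
      (∑ s₀, ENNReal.ofReal (μ s₀) * reachMass T P π s t s₀) *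
        pathMass T P π s (SuccessEvent Tp) := by
  rw [trajMeasure_eq_reachMass_mul T P π hμ hs hw
    (fun t => {ω | stateAt ω t = s} ∩ SuccessEvent Tp) (fun _ => Set.inter_subset_left)
    (fun t s₀ h b => preimage_cons_stateAt_inter_successEvent (fun h' => h (hTp h')) b s t),
    pathMass_stateAt_zero_inter]

lemma trajMeasure_stateAt_inter_successEvent_inter_actionAt {μ : S → ℝ} (hμ : ∀ s, 0 ≤ μ s)
    {Tp : Finset S} (hTp : Tp ⊆ T) {s : S} (hs : s ∉ T)
    (hw : ∀ s₀ ∉ T, ∀ b s', 0 ≤ π s₀ b * P s₀ b s') (t : ℕ) {a : A} (ha : 0 ≤ π s a) :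
    trajMeasure T P π μ
        ({ω | stateAt ω t = s} ∩ SuccessEvent Tp ∩ {ω | actionAt ω t = some a}) =
      (∑ s₀, ENNReal.ofReal (μ s₀) * reachMass T P π s t s₀) * (ENNReal.ofReal (π s a) *
        ∑ s', ENNReal.ofReal (P s a s') * pathMass T P π s' (SuccessEvent Tp)) := by
  have hTp' : ∀ s₀ ∉ T, s₀ ∉ Tp := fun _ h h' => h (hTp h')
  rw [trajMeasure_eq_reachMass_mul T P π hμ hs hw
    (fun t => {ω | stateAt ω t = s} ∩ SuccessEvent Tp ∩ {ω | actionAt ω t = some a})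
    (fun _ => Set.inter_subset_left.trans Set.inter_subset_left)
    (fun t s₀ h b => by simp only [Set.preimage_inter,
      ← preimage_cons_stateAt_inter_successEvent (hTp' s₀ h) b s t, Set.preimage_ofPred_eq,
      actionAt_cons_succ]),
    Set.inter_assoc, pathMass_stateAt_zero_inter,
    pathMass_inter_actionAt_zero T P π hs (hw s hs) _ ha, preimage_cons_successEvent (hTp' s hs)]

end PathMass

theorem success_conditioned_policy_bayes_formula_general
    {S A : Type*} [Fintype S] [DecidableEq S] [Fintype A]
    (T Tp Tm : Finset S) (hpart : Tp ∪ Tm = T)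
    (P : S → A → S → ℝ) (hP : ∀ s a, IsPMFOn (P s a))
    (π0 : S → A → ℝ) (hπ0 : ∀ s ∉ T, IsPMFOn (π0 s))
    (hV0 : ∀ s ∉ T, 0 < Vval T Tp P π0 s)
    (μ : S → ℝ) (hμ : IsPMFOn μ)
    (t : ℕ) (s : S) (hs : s ∉ T) (a : A)
    (hpos : 0 < trajMeasure T P π0 μ ({ω | stateAt ω t = s} ∩ SuccessEvent Tp)) :
    ProbabilityTheory.cond (trajMeasure T P π0 μ)
        ({ω | stateAt ω t = s} ∩ SuccessEvent Tp) {ω | actionAt ω t = some a}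
      = ENNReal.ofReal (π0 s a * Qval T Tp P π0 s a / Vval T Tp P π0 s)
    ∧ piPlus T Tp P π0 s a = π0 s a * Qval T Tp P π0 s a / Vval T Tp P π0 s := by
  have hTp : Tp ⊆ T := hpart ▸ Finset.subset_union_left
  have hw : ∀ s₀ ∉ T, ∀ b s', 0 ≤ π0 s₀ b * P s₀ b s' := fun s₀ h b s' =>
    mul_nonneg ((hπ0 s₀ h).1 b) ((hP s₀ b).1 s')
  have hfin := pathMass_successEvent_ne_top T P π0 hV0
  have hD := trajMeasure_stateAt_inter_successEvent T P π0 hμ.1 hTp hs hw t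
  have hN := trajMeasure_stateAt_inter_successEvent_inter_actionAt T P π0 hμ.1 hTp hs hw t
    ((hπ0 s hs).1 a)
  set K := ∑ s₀, ENNReal.ofReal (μ s₀) * reachMass T P π0 s t s₀
  have hK0 : K ≠ 0 := left_ne_zero_of_mul (hD ▸ hpos.ne')
  have hKtop : K ≠ ⊤ := ENNReal.sum_ne_top.2 fun s₀ _ =>
    ENNReal.mul_ne_top ENNReal.ofReal_ne_top (reachMass_ne_top T P π0 s t s₀)
  refine ⟨?_, rfl⟩
  rw [ProbabilityTheory.cond_apply (by trivial), hD, hN, ENNReal.ofReal_div_of_pos (hV0 s hs),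
    ENNReal.ofReal_mul ((hπ0 s hs).1 a), ofReal_Qval T P π0 (fun s' => (hP s a).1 s') hfin,
    ofReal_Vval T P π0 (hfin s), ← ENNReal.mul_div_mul_left _ _ hK0 hKtop, ENNReal.div_eq_inv_mul]

/-- **Bayes formula for the success-conditioned policy.**
Episodic-MDP setup: `S` finite with terminal set `𝒯 = 𝒯₊ ∪ 𝒯₋` (disjoint), `A`
finite nonempty, transition kernel `P` (a pmf in its last argument) absorbing on
`𝒯`, every Markov policy reaching `𝒯` almost surely from every state, behavior
policy `π0` with `V_{π0}(s) > 0` at every nonterminal `s`, and initial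
distribution `μ` supported on nonterminal states.

For every `t ≥ 0`, nonterminal `s`, and action `a`, if
`ℙ_{π0,μ}(Xₜ = s ∧ ∃ u, X_u ∈ 𝒯₊) > 0`, then
`ℙ_{π0,μ}(Aₜ = a | Xₜ = s ∧ ∃ u, X_u ∈ 𝒯₊) = π0(a|s)·Q_{π0}(s,a)/V_{π0}(s)
 = π₊(a|s)`; in particular this conditional action distribution does not depend
on `t` or `μ`. -/
theorem success_conditioned_policy_bayes_formula
    {S A : Type*} [Fintype S] [DecidableEq S] [Fintype A] [Nonempty A]
    (T Tp Tm : Finset S) (hpart : Tp ∪ Tm = T) (hdisj : Disjoint Tp Tm)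
    (P : S → A → S → ℝ) (hP : ∀ s a, IsPMFOn (P s a))
    (habs : ∀ s ∈ T, ∀ a, P s a s = 1)
    (hterm : ∀ π : S → A → ℝ, (∀ s ∉ T, IsPMFOn (π s)) →
      ∀ s : S, trajMeasure T P π (pointMass s) Set.univ = 1)
    (π0 : S → A → ℝ) (hπ0 : ∀ s ∉ T, IsPMFOn (π0 s))
    (hV0 : ∀ s ∉ T, 0 < Vval T Tp P π0 s)
    (μ : S → ℝ) (hμ : IsPMFOn μ) (hμT : ∀ s ∈ T, μ s = 0)
    (t : ℕ) (s : S) (hs : s ∉ T) (a : A)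
    (hpos : 0 < trajMeasure T P π0 μ ({ω | stateAt ω t = s} ∩ SuccessEvent Tp)) :
    ProbabilityTheory.cond (trajMeasure T P π0 μ)
        ({ω | stateAt ω t = s} ∩ SuccessEvent Tp) {ω | actionAt ω t = some a}
      = ENNReal.ofReal (π0 s a * Qval T Tp P π0 s a / Vval T Tp P π0 s)
    ∧ piPlus T Tp P π0 s a = π0 s a * Qval T Tp P π0 s a / Vval T Tp P π0 s :=
  success_conditioned_policy_bayes_formula_general T Tp Tm hpart P hP π0 hπ0 hV0 μ hμ t s hs a hpos
end

section
/- The success-conditioned policy exactly solves the trust-region problem: (i) π₊ satisfies the constraint with equality, Σ_s w(s)·χ²_s(π₊‖π0) = Σ_s w(s)·I(s); and (ii) for every family π of probability mass functions π(·|s) on A satisfying Σ_s w(s)·χ²_s(π‖π0) ≤ Σ_s w(s)·I(s), one has Σ_s w(s)·(Σ_a π(a|s)·Adv(s,a))/V(s) ≤ Σ_s w(s)·(Σ_a π₊(a|s)·Adv(s,a))/V(s) = Σ_s w(s)·I(s). -/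
/-!
Write `r = π/π0 - 1` for the likelihood-ratio deviation of a policy and `g = Adv/V` for the
normalised advantage. Since `g` is centred under `π0`, the normalised gain of `π` is the
`π0`-correlation `Σ_a π0·r·g`, and for `π₊` one has `r = g` exactly. Hence `π₊` has
`χ²_s = I(s)` and gain `I(s)`, while for any `π` the inequality `r·g ≤ (r² + g²)/2` bounds the
weighted gain by `(Σ_s w·χ²_s + Σ_s w·I)/2 ≤ Σ_s w·I` under the trust-region constraint.
-/

open Finset

section WeightedSums

variable {ι : Type*} [Fintype ι]

theorem sum_mul_sub_sum_mul_eq_zero {p : ι → ℝ} (hp : ∑ i, p i = 1) (f : ι → ℝ) :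
    ∑ i, p i * (f i - ∑ j, p j * f j) = 0 := by
  simp only [mul_sub, sum_sub_distrib, ← sum_mul, hp, one_mul, sub_self]

theorem sum_mul_div_eq_sum_mul_ratio_sub_one_mul {p f : ι → ℝ} (hp : ∀ i, p i ≠ 0)
    (hf : ∑ i, p i * f i = 0) (q : ι → ℝ) (c : ℝ) :
    (∑ i, q i * f i) / c = ∑ i, p i * ((q i / p i - 1) * (f i / c)) := by
  have hsplit : ∑ i, q i * f i = ∑ i, p i * ((q i / p i - 1) * f i) + ∑ i, p i * f i := by
    rw [← sum_add_distrib]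
    refine sum_congr rfl fun i _ => ?_
    field_simp [hp i]
    ring
  rw [hsplit, hf, add_zero, sum_div]
  exact sum_congr rfl fun i _ => by ring

theorem sum_mul_mul_le_half_add {p : ι → ℝ} (hp : ∀ i, 0 ≤ p i) (x y : ι → ℝ) :
    ∑ i, p i * (x i * y i) ≤ (∑ i, p i * x i ^ 2 + ∑ i, p i * y i ^ 2) / 2 := by
  rw [← sum_add_distrib, sum_div]
  refine sum_le_sum fun i _ => ?_
  nlinarith [mul_nonneg (hp i) (sq_nonneg (x i - y i))]

end WeightedSums

theorem success_conditioning_solves_trust_region_general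
    {S A : Type*} [Fintype S] [Fintype A]
    (π0 : S → A → ℝ) (hπ0pos : ∀ s a, 0 < π0 s a) (hπ0sum : ∀ s, ∑ a, π0 s a = 1)
    (Q : S → A → ℝ)
    (V : S → ℝ) (hV : ∀ s, V s = ∑ a, π0 s a * Q s a) (hVpos : ∀ s, 0 < V s)
    (Adv : S → A → ℝ) (hAdv : ∀ s a, Adv s a = Q s a - V s)
    (πp : S → A → ℝ) (hπp : ∀ s a, πp s a = π0 s a * Q s a / V s)
    (I : S → ℝ) (hI : ∀ s, I s = ∑ a, π0 s a * (Adv s a / V s) ^ 2)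
    (w : S → ℝ) (hw : ∀ s, 0 ≤ w s) :
    (∑ s, w s * ∑ a, π0 s a * (πp s a / π0 s a - 1) ^ 2 = ∑ s, w s * I s)
      ∧ ∀ π : S → A → ℝ, (∀ s a, 0 ≤ π s a) → (∀ s, ∑ a, π s a = 1) →
          (∑ s, w s * ∑ a, π0 s a * (π s a / π0 s a - 1) ^ 2 ≤ ∑ s, w s * I s) →
          (∑ s, w s * ((∑ a, π s a * Adv s a) / V s)
              ≤ ∑ s, w s * ((∑ a, πp s a * Adv s a) / V s)
            ∧ ∑ s, w s * ((∑ a, πp s a * Adv s a) / V s) = ∑ s, w s * I s) := by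
  have hratio : ∀ s a, πp s a / π0 s a - 1 = Adv s a / V s := fun s a => by
    rw [hπp, hAdv]
    field_simp [(hπ0pos s a).ne', (hVpos s).ne']
  have hgain : ∀ s (q : A → ℝ),
      (∑ a, q a * Adv s a) / V s = ∑ a, π0 s a * ((q a / π0 s a - 1) * (Adv s a / V s)) :=
    fun s q => sum_mul_div_eq_sum_mul_ratio_sub_one_mul (f := Adv s) (fun a => (hπ0pos s a).ne')
      (by simp only [hAdv, hV]; exact sum_mul_sub_sum_mul_eq_zero (hπ0sum s) (Q s)) q (V s)
  have hchi : ∀ s, ∑ a, π0 s a * (πp s a / π0 s a - 1) ^ 2 = I s := fun s => by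
    simp only [hratio, hI]
  have hgain_succ : ∀ s, (∑ a, πp s a * Adv s a) / V s = I s := fun s => by
    simp only [hgain, hratio, hI, sq]
  refine ⟨by simp only [hchi], fun π _ _ hconstr => ⟨?_, by simp only [hgain_succ]⟩⟩
  calc ∑ s, w s * ((∑ a, π s a * Adv s a) / V s)
      ≤ ∑ s, w s * ((∑ a, π0 s a * (π s a / π0 s a - 1) ^ 2 + I s) / 2) := by
        refine sum_le_sum fun s _ => mul_le_mul_of_nonneg_left ?_ (hw s)
        rw [hgain, hI]
        exact sum_mul_mul_le_half_add (fun a => (hπ0pos s a).le) _ _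
    _ = (∑ s, w s * ∑ a, π0 s a * (π s a / π0 s a - 1) ^ 2 + ∑ s, w s * I s) / 2 := by
        rw [← sum_add_distrib, sum_div]
        exact sum_congr rfl fun s _ => by ring
    _ ≤ ∑ s, w s * ((∑ a, πp s a * Adv s a) / V s) := by
        simp only [hgain_succ]
        linarith

/-- **Success conditioning exactly solves the trust-region problem.**
Multi-state setup: for each state `s` of a finite nonempty type `S`, `π0(·|s)` is a
strictly positive pmf on a finite nonempty action type `A`, `Q(s,·)` takes values
in `[0,1]`, `V(s) = Σ_a π0(a|s)·Q(s,a) > 0`, `Adv(s,a) = Q(s,a) − V(s)`,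
`π₊(a|s) = π0(a|s)·Q(s,a)/V(s)`, `I(s) = Σ_a π0(a|s)·(Adv(s,a)/V(s))²`,
`χ²_s(π‖π0) = Σ_a π0(a|s)·(π(a|s)/π0(a|s) − 1)²`, and `w : S → ℝ` is nonnegative.

(i) `π₊` satisfies the trust-region constraint with equality,
`Σ_s w(s)·χ²_s(π₊‖π0) = Σ_s w(s)·I(s)`; and (ii) every family `π` of pmfs
satisfying `Σ_s w(s)·χ²_s(π‖π0) ≤ Σ_s w(s)·I(s)` has
`Σ_s w(s)·(Σ_a π(a|s)·Adv(s,a))/V(s) ≤ Σ_s w(s)·(Σ_a π₊(a|s)·Adv(s,a))/V(s)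
 = Σ_s w(s)·I(s)`. -/
theorem success_conditioning_solves_trust_region
    {S A : Type*} [Fintype S] [Nonempty S] [Fintype A] [Nonempty A]
    (π0 : S → A → ℝ) (hπ0pos : ∀ s a, 0 < π0 s a) (hπ0sum : ∀ s, ∑ a, π0 s a = 1)
    (Q : S → A → ℝ) (hQ : ∀ s a, 0 ≤ Q s a ∧ Q s a ≤ 1)
    (V : S → ℝ) (hV : ∀ s, V s = ∑ a, π0 s a * Q s a) (hVpos : ∀ s, 0 < V s)
    (Adv : S → A → ℝ) (hAdv : ∀ s a, Adv s a = Q s a - V s)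
    (πp : S → A → ℝ) (hπp : ∀ s a, πp s a = π0 s a * Q s a / V s)
    (I : S → ℝ) (hI : ∀ s, I s = ∑ a, π0 s a * (Adv s a / V s) ^ 2)
    (w : S → ℝ) (hw : ∀ s, 0 ≤ w s) :
    (∑ s, w s * ∑ a, π0 s a * (πp s a / π0 s a - 1) ^ 2 = ∑ s, w s * I s)
      ∧ ∀ π : S → A → ℝ, (∀ s a, 0 ≤ π s a) → (∀ s, ∑ a, π s a = 1) →
          (∑ s, w s * ∑ a, π0 s a * (π s a / π0 s a - 1) ^ 2 ≤ ∑ s, w s * I s) →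
          (∑ s, w s * ((∑ a, π s a * Adv s a) / V s)
              ≤ ∑ s, w s * ((∑ a, πp s a * Adv s a) / V s)
            ∧ ∑ s, w s * ((∑ a, πp s a * Adv s a) / V s) = ∑ s, w s * I s) :=
  success_conditioning_solves_trust_region_general π0 hπ0pos hπ0sum Q V hV hVpos Adv hAdv πp hπp I
    hI w hw
end

section
/- Proxy-reward identity: assume Var(Adv) > 0 and Var(Ãdv) > 0. Then (Σ_a π̃₊(a)·Adv(a)) / (Σ_a π₊(a)·Adv(a)) = √(Ĩ/I) · Cov(Adv,Ãdv)/√(Var(Adv)·Var(Ãdv)); that is, the ratio of the faithful advantage of the proxy success-conditioned policy to that of the faithful success-conditioned policy equals the square root of the ratio of action-influences times the correlation between the two advantage functions under π0. -/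
/-!
Under `π0` the advantage `Adv` is centred, so reweighting `π0` by `Q̃ / Ṽ = 1 + Ãdv / Ṽ` gives
`Σ π̃₊ · Adv = Cov(Adv, Ãdv) / Ṽ`, and likewise `Σ π₊ · Adv = Var(Adv) / V`. The influences are
`I = Var(Adv) / V²` and `Ĩ = Var(Ãdv) / Ṽ²`, so both sides equal `V · Cov(Adv, Ãdv) / (Ṽ · Var(Adv))`.
-/

open Finset

namespace ProxyReward

variable {ι : Type*} [Fintype ι] (w : ι → ℝ)

def weightedCov (f g : ι → ℝ) : ℝ :=
  ∑ i, w i * f i * g i - (∑ i, w i * f i) * (∑ i, w i * g i)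

variable {w}

lemma sum_mul_sub_weighted_mean (hw : ∑ i, w i = 1) (f : ι → ℝ) :
    ∑ i, w i * (f i - ∑ j, w j * f j) = 0 := by
  simp only [mul_sub, sum_sub_distrib, ← sum_mul, hw, one_mul, sub_self]

lemma weightedCov_of_mean_eq_zero {f : ι → ℝ} (hf : ∑ i, w i * f i = 0) (g : ι → ℝ) :
    weightedCov w f g = ∑ i, w i * f i * g i := by
  rw [weightedCov, hf, zero_mul, sub_zero]

lemma sum_mul_div_sq_of_mean_eq_zero {f : ι → ℝ} (hf : ∑ i, w i * f i = 0) (c : ℝ) :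
    ∑ i, w i * (f i / c) ^ 2 = weightedCov w f f / c ^ 2 := by
  rw [weightedCov_of_mean_eq_zero hf, sum_div]
  exact sum_congr rfl fun i _ => by ring

lemma sum_tilt_mul_of_mean_eq_zero {f q g : ι → ℝ} {c : ℝ} (hf : ∑ i, w i * f i = 0)
    (hg : ∀ i, g i = q i - c) :
    ∑ i, w i * q i / c * f i = weightedCov w f g / c := by
  have hsplit : ∑ i, w i * f i * g i = ∑ i, w i * q i * f i - c * ∑ i, w i * f i := by
    rw [mul_sum, ← sum_sub_distrib]
    exact sum_congr rfl fun i _ => by rw [hg]; ring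
  rw [weightedCov_of_mean_eq_zero hf, hsplit, hf, mul_zero, sub_zero, sum_div]
  exact sum_congr rfl fun i _ => by ring

end ProxyReward

lemma div_div_eq_sqrt_div_mul_div_sqrt {σ τ v vt : ℝ} (hσ : 0 < σ) (hτ : 0 < τ)
    (hv : 0 < v) (hvt : 0 < vt) (c : ℝ) :
    c / vt / (σ / v) = √(τ / vt ^ 2 / (σ / v ^ 2)) * (c / √(σ * τ)) := by
  have hσ' : √σ ^ 2 = σ := Real.sq_sqrt hσ.le
  have hτ' : √τ ^ 2 = τ := Real.sq_sqrt hτ.le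
  have hratio : τ / vt ^ 2 / (σ / v ^ 2) = (√τ * v / (√σ * vt)) ^ 2 := by
    rw [div_pow, mul_pow, mul_pow, hσ', hτ']
    field_simp
  have hsσ : 0 < √σ := Real.sqrt_pos.mpr hσ
  have hsτ : 0 < √τ := Real.sqrt_pos.mpr hτ
  rw [hratio, Real.sqrt_sq (by positivity), Real.sqrt_mul hσ.le]
  field_simp
  rw [hσ']

open ProxyReward in
theorem proxy_reward_identity_general
    {A : Type*} [Fintype A]
    (π0 : A → ℝ) (hπ0sum : ∑ a, π0 a = 1)
    (Q Qt : A → ℝ)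
    (V Vt : ℝ) (hV : V = ∑ a, π0 a * Q a) (hVt : Vt = ∑ a, π0 a * Qt a)
    (hVpos : 0 < V) (hVtpos : 0 < Vt)
    (Adv Advt : A → ℝ) (hAdv : ∀ a, Adv a = Q a - V) (hAdvt : ∀ a, Advt a = Qt a - Vt)
    (πp πpt : A → ℝ) (hπp : ∀ a, πp a = π0 a * Q a / V)
    (hπpt : ∀ a, πpt a = π0 a * Qt a / Vt)
    (I It : ℝ) (hI : I = ∑ a, π0 a * (Adv a / V) ^ 2)
    (hIt : It = ∑ a, π0 a * (Advt a / Vt) ^ 2)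
    (Cov : (A → ℝ) → (A → ℝ) → ℝ)
    (hCov : ∀ f g, Cov f g
      = ∑ a, π0 a * f a * g a - (∑ a, π0 a * f a) * (∑ a, π0 a * g a))
    (hVar : 0 < Cov Adv Adv) (hVart : 0 < Cov Advt Advt) :
    (∑ a, πpt a * Adv a) / (∑ a, πp a * Adv a)
      = Real.sqrt (It / I)
        * (Cov Adv Advt / Real.sqrt (Cov Adv Adv * Cov Advt Advt)) := by
  obtain rfl : Cov = weightedCov π0 := funext₂ hCov
  have hAdv0 : ∑ a, π0 a * Adv a = 0 := by
    simp only [hAdv, hV]; exact sum_mul_sub_weighted_mean hπ0sum Q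
  have hAdvt0 : ∑ a, π0 a * Advt a = 0 := by
    simp only [hAdvt, hVt]; exact sum_mul_sub_weighted_mean hπ0sum Qt
  have hSp : ∑ a, πp a * Adv a = weightedCov π0 Adv Adv / V := by
    simp only [hπp]; exact sum_tilt_mul_of_mean_eq_zero hAdv0 hAdv
  have hSpt : ∑ a, πpt a * Adv a = weightedCov π0 Adv Advt / Vt := by
    simp only [hπpt]; exact sum_tilt_mul_of_mean_eq_zero hAdv0 hAdvt
  rw [hSp, hSpt, hI, hIt, sum_mul_div_sq_of_mean_eq_zero hAdv0,
    sum_mul_div_sq_of_mean_eq_zero hAdvt0]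
  exact div_div_eq_sqrt_div_mul_div_sqrt hVar hVart hVpos hVtpos _

/-- **Proxy-reward identity.**
Single-state setup with two rewards: `π0` is a strictly positive pmf on a finite
nonempty action type `A`; `Q, Q̃ : A → ℝ` take values in `[0,1]`;
`V = Σ_a π0(a)·Q(a) > 0` and `Ṽ = Σ_a π0(a)·Q̃(a) > 0`;
`Adv(a) = Q(a) − V`, `Ãdv(a) = Q̃(a) − Ṽ`; `π₊(a) = π0(a)·Q(a)/V`,
`π̃₊(a) = π0(a)·Q̃(a)/Ṽ`; the action-influences are `I = Σ_a π0(a)·(Adv(a)/V)²`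
and `Ĩ = Σ_a π0(a)·(Ãdv(a)/Ṽ)²`; and
`Cov(f,g) = Σ_a π0(a)·f(a)·g(a) − (Σ_a π0(a)·f(a))·(Σ_a π0(a)·g(a))`,
`Var(f) = Cov(f,f)`.

Assume `Var(Adv) > 0` and `Var(Ãdv) > 0`.  Then
`(Σ_a π̃₊(a)·Adv(a)) / (Σ_a π₊(a)·Adv(a))
  = √(Ĩ/I) · Cov(Adv,Ãdv)/√(Var(Adv)·Var(Ãdv))`. -/
theorem proxy_reward_identity
    {A : Type*} [Fintype A] [Nonempty A]
    (π0 : A → ℝ) (hπ0pos : ∀ a, 0 < π0 a) (hπ0sum : ∑ a, π0 a = 1)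
    (Q Qt : A → ℝ) (hQ : ∀ a, 0 ≤ Q a ∧ Q a ≤ 1) (hQt : ∀ a, 0 ≤ Qt a ∧ Qt a ≤ 1)
    (V Vt : ℝ) (hV : V = ∑ a, π0 a * Q a) (hVt : Vt = ∑ a, π0 a * Qt a)
    (hVpos : 0 < V) (hVtpos : 0 < Vt)
    (Adv Advt : A → ℝ) (hAdv : ∀ a, Adv a = Q a - V) (hAdvt : ∀ a, Advt a = Qt a - Vt)
    (πp πpt : A → ℝ) (hπp : ∀ a, πp a = π0 a * Q a / V)
    (hπpt : ∀ a, πpt a = π0 a * Qt a / Vt)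
    (I It : ℝ) (hI : I = ∑ a, π0 a * (Adv a / V) ^ 2)
    (hIt : It = ∑ a, π0 a * (Advt a / Vt) ^ 2)
    (Cov : (A → ℝ) → (A → ℝ) → ℝ)
    (hCov : ∀ f g, Cov f g
      = ∑ a, π0 a * f a * g a - (∑ a, π0 a * f a) * (∑ a, π0 a * g a))
    (hVar : 0 < Cov Adv Adv) (hVart : 0 < Cov Advt Advt) :
    (∑ a, πpt a * Adv a) / (∑ a, πp a * Adv a)
      = Real.sqrt (It / I)
        * (Cov Adv Advt / Real.sqrt (Cov Adv Adv * Cov Advt Advt)) :=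
  proxy_reward_identity_general π0 hπ0sum Q Qt V Vt hV hVt hVpos hVtpos Adv Advt hAdv hAdvt πp πpt
    hπp hπpt I It hI hIt Cov hCov hVar hVart
end

section
/- Chi-squared tolerance, lower bound: for every c ∈ (0, √ε) there exists δ₀ ∈ (0,1), depending only on c and ε and not on k, such that for all δ ∈ (0, δ₀), the probability mass function π with π(a⋆) = δ + c√δ and π(aᵢ) = (1 − δ − c√δ)/k for i = 1,…,k satisfies χ²(π‖π0) ≤ ε. Consequently sup{π(a⋆) : χ²(π‖π0) ≤ ε} ≥ δ + c√δ for all δ ∈ (0, δ₀). -/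
/-- Rare-action behavior policy on the action set `{a⋆, a₁, …, a_k}` (modeled as
`Option (Fin k)`, with `a⋆ = none`): `π0(a⋆) = δ` and `π0(aᵢ) = (1−δ)/k`. -/
noncomputable def rarePi0 (k : ℕ) (δ : ℝ) : Option (Fin k) → ℝ
  | none => δ
  | some _ => (1 - δ) / k

/-- Chi-squared divergence `χ²(p‖q) = Σ_x q(x)·(p(x)/q(x) − 1)²`. -/
noncomputable def chiSqDiv {α : Type*} [Fintype α] (p q : α → ℝ) : ℝ :=
  ∑ x, q x * (p x / q x - 1) ^ 2

/-- The perturbed policy with `π(a⋆) = δ + c·√δ` and `π(aᵢ) = (1 − δ − c·√δ)/k`. -/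
noncomputable def rarePertChi (k : ℕ) (δ c : ℝ) : Option (Fin k) → ℝ
  | none => δ + c * Real.sqrt δ
  | some _ => (1 - (δ + c * Real.sqrt δ)) / k

/-!
The perturbed policy is the behaviour policy itself at the larger level `δ + c√δ`. Between two
such policies the `k` uniform atoms act like one atom of mass `1 - b`, so
`χ²(π_a ‖ π_b) = (a - b)² / (b (1 - b))` independently of `k`; at `a - b = c√δ` this is
`c² / (1 - δ)`, which is at most `ε` as soon as `δ ≤ 1 - c²/ε`. Taking also
`δ ≤ (1 + c)⁻²` keeps `δ + c√δ ≤ 1`, so the perturbation is a pmf and its mass at `a⋆` is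
a member of the set whose supremum is taken (bounded by `1`).
-/

theorem IsPMFOn.le_one {α : Type*} [Fintype α] {p : α → ℝ} (hp : IsPMFOn p) (x : α) :
    p x ≤ 1 :=
  hp.2 ▸ Finset.single_le_sum (fun y _ => hp.1 y) (Finset.mem_univ x)

section

variable {k : ℕ}

theorem rarePertChi_eq_rarePi0 (δ c : ℝ) :
    rarePertChi k δ c = rarePi0 k (δ + c * Real.sqrt δ) := by
  funext x; cases x <;> rfl

theorem isPMFOn_rarePi0 (hk : k ≠ 0) {a : ℝ} (ha0 : 0 ≤ a) (ha1 : a ≤ 1) :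
    IsPMFOn (rarePi0 k a) := by
  refine ⟨fun x => ?_, ?_⟩
  · cases x with
    | none => exact ha0
    | some _ => exact div_nonneg (sub_nonneg.2 ha1) k.cast_nonneg
  · simp only [Fintype.sum_option, rarePi0, Finset.sum_const, Finset.card_univ,
      Fintype.card_fin, nsmul_eq_mul]
    field_simp
    ring

theorem chiSqDiv_rarePi0 (hk : k ≠ 0) (a : ℝ) {b : ℝ} (hb0 : 0 < b) (hb1 : b < 1) :
    chiSqDiv (rarePi0 k a) (rarePi0 k b) = (a - b) ^ 2 / (b * (1 - b)) := by
  have hb1' : 1 - b ≠ 0 := by linarith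
  simp only [chiSqDiv, Fintype.sum_option, rarePi0, Finset.sum_const, Finset.card_univ,
    Fintype.card_fin, nsmul_eq_mul]
  field_simp
  ring

theorem chiSqDiv_rarePi0_add_mul_sqrt (hk : k ≠ 0) (c : ℝ) {δ : ℝ} (hδ0 : 0 < δ) (hδ1 : δ < 1) :
    chiSqDiv (rarePi0 k (δ + c * Real.sqrt δ)) (rarePi0 k δ) = c ^ 2 / (1 - δ) := by
  rw [chiSqDiv_rarePi0 hk _ hδ0 hδ1, add_sub_cancel_left, mul_pow, Real.sq_sqrt hδ0.le,
    mul_comm δ, mul_div_mul_right _ _ hδ0.ne']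

end

theorem add_mul_sqrt_le_one {δ c : ℝ} (hc : 0 ≤ c) (hδ0 : 0 ≤ δ) (hδ : δ ≤ (1 / (1 + c)) ^ 2) :
    δ + c * Real.sqrt δ ≤ 1 := by
  have hs : Real.sqrt δ * (1 + c) ≤ 1 :=
    (le_div_iff₀ (by positivity)).1 (Real.sqrt_le_iff.2 ⟨by positivity, hδ⟩)
  nlinarith [Real.sqrt_nonneg δ, Real.sq_sqrt hδ0]

theorem chiSq_rare_action_lower_bound_general
    (ε : ℝ) (c : ℝ) (hc0 : 0 < c) (hc : c < Real.sqrt ε) :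
    ∃ δ₀ ∈ Set.Ioo (0 : ℝ) 1, ∀ k : ℕ, 2 ≤ k → ∀ δ ∈ Set.Ioo (0 : ℝ) δ₀,
      (IsPMFOn (rarePertChi k δ c) ∧ chiSqDiv (rarePertChi k δ c) (rarePi0 k δ) ≤ ε)
      ∧ δ + c * Real.sqrt δ
          ≤ sSup {p : ℝ | ∃ π : Option (Fin k) → ℝ,
              IsPMFOn π ∧ chiSqDiv π (rarePi0 k δ) ≤ ε ∧ π none = p} := by
  have hc2 : c ^ 2 < ε := (Real.lt_sqrt hc0.le).1 hc
  have hε : 0 < ε := (pow_pos hc0 2).trans hc2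
  have hcε : c ^ 2 / ε < 1 := (div_lt_one hε).2 hc2
  have hc1 : (1 / (1 + c)) ^ 2 < 1 :=
    pow_lt_one₀ (by positivity) ((div_lt_one (by positivity)).2 (by linarith)) two_ne_zero
  refine ⟨min (1 - c ^ 2 / ε) ((1 / (1 + c)) ^ 2),
    ⟨lt_min (by linarith) (by positivity), (min_le_right _ _).trans_lt hc1⟩, ?_⟩
  rintro k hk δ ⟨hδ0, hδ⟩
  have hk0 : k ≠ 0 := by omega
  have hδε : c ^ 2 < ε * (1 - δ) :=
    (div_lt_iff₀' hε).1 (by linarith [hδ.trans_le (min_le_left _ _)])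
  have hδ1 : δ < 1 := hδ.trans ((min_le_right _ _).trans_lt hc1)
  have hpmf : IsPMFOn (rarePertChi k δ c) := by
    rw [rarePertChi_eq_rarePi0]
    exact isPMFOn_rarePi0 hk0 (by positivity)
      (add_mul_sqrt_le_one hc0.le hδ0.le (hδ.le.trans (min_le_right _ _)))
  have hchi : chiSqDiv (rarePertChi k δ c) (rarePi0 k δ) ≤ ε := by
    rw [rarePertChi_eq_rarePi0, chiSqDiv_rarePi0_add_mul_sqrt hk0 c hδ0 hδ1,
      div_le_iff₀ (sub_pos.2 hδ1)]
    exact hδε.le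
  exact ⟨⟨hpmf, hchi⟩,
    le_csSup ⟨1, by rintro _ ⟨π, hπ, -, rfl⟩; exact hπ.le_one none⟩ ⟨_, hpmf, hchi, rfl⟩⟩

/-- **Chi-squared tolerance for a rare action, lower bound.**
For every `c ∈ (0, √ε)` there exists `δ₀ ∈ (0,1)`, depending only on `c` and `ε`
and not on `k`, such that for all `k ≥ 2` and all `δ ∈ (0, δ₀)`, the probability
mass function `π` with `π(a⋆) = δ + c√δ` and `π(aᵢ) = (1 − δ − c√δ)/k` satisfies
`χ²(π‖π0) ≤ ε`.  Consequently `sup{π(a⋆) : π pmf, χ²(π‖π0) ≤ ε} ≥ δ + c√δ`. -/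
theorem chiSq_rare_action_lower_bound
    (ε : ℝ) (hε : 0 < ε) (c : ℝ) (hc0 : 0 < c) (hc : c < Real.sqrt ε) :
    ∃ δ₀ ∈ Set.Ioo (0 : ℝ) 1, ∀ k : ℕ, 2 ≤ k → ∀ δ ∈ Set.Ioo (0 : ℝ) δ₀,
      (IsPMFOn (rarePertChi k δ c) ∧ chiSqDiv (rarePertChi k δ c) (rarePi0 k δ) ≤ ε)
      ∧ δ + c * Real.sqrt δ
          ≤ sSup {p : ℝ | ∃ π : Option (Fin k) → ℝ,
              IsPMFOn π ∧ chiSqDiv π (rarePi0 k δ) ≤ ε ∧ π none = p} :=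
  chiSq_rare_action_lower_bound_general ε c hc0 hc
end

section
/- Forward-KL tolerance, upper bound: for every c > ε there exists δ₀ ∈ (0,1), depending only on c and ε and not on k, such that for all δ ∈ (0, δ₀), every probability mass function π on {a⋆, a₁, …, a_k} with KL(π‖π0) ≤ ε satisfies π(a⋆) ≤ c/log(1/δ). -/
/-- Forward KL divergence `KL(p‖q) = Σ_x p(x)·log(p(x)/q(x))`
(with the junk-value convention `0·log 0 = 0`, automatic since `Real.log 0 = 0`). -/
noncomputable def klDivFin {α : Type*} [Fintype α] (p q : α → ℝ) : ℝ :=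
  ∑ x, p x * Real.log (p x / q x)

/-!
With `p = π(a⋆)` and `L = log(1/δ)`, bounding every other term of the divergence by
`x log(x/q) ≥ x - q` leaves `p (log p + L - 1) ≤ ε`, whatever `k` is. The map
`t ↦ t (log t + L - 1)` is increasing where it is positive, and at `x = c/L` it equals
`c + x log x - x`, which tends to `c > ε` as `L → ∞`. So `p ≤ c/L` once `δ` is small enough.
-/

open Filter Topology

lemma sub_le_mul_log_div {x q : ℝ} (hx : 0 ≤ x) (hq : 0 < q) :
    x - q ≤ x * Real.log (x / q) := by
  have h := mul_nonneg hq.le (InformationTheory.klFun_nonneg (div_nonneg hx hq.le))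
  rw [InformationTheory.klFun] at h
  field_simp at h
  linarith

lemma mul_log_div_eq_mul_log_add_log_one_div (x : ℝ) {δ : ℝ} (hδ : δ ≠ 0) :
    x * Real.log (x / δ) = x * (Real.log x + Real.log (1 / δ)) := by
  rcases eq_or_ne x 0 with rfl | hx
  · simp
  · rw [Real.log_div hx hδ, one_div, Real.log_inv, sub_eq_add_neg]

lemma le_klDivFin_rarePi0 {k : ℕ} (hk : k ≠ 0) {δ : ℝ} (hδ : δ < 1)
    {π : Option (Fin k) → ℝ} (hπ : IsPMFOn π) :
    π none * Real.log (π none / δ) + δ - π none ≤ klDivFin π (rarePi0 k δ) := by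
  obtain ⟨hπ_nonneg, hπ_sum⟩ := hπ
  rw [Fintype.sum_option] at hπ_sum
  have hq : 0 < (1 - δ) / k := div_pos (by linarith) (by positivity)
  have htail : ∑ i : Fin k, (π (some i) - (1 - δ) / k) = δ - π none := by
    rw [Finset.sum_sub_distrib, Finset.sum_const, Finset.card_univ, Fintype.card_fin,
      nsmul_eq_mul, mul_div_cancel₀ _ (Nat.cast_ne_zero.mpr hk)]
    linarith
  rw [klDivFin, Fintype.sum_option, add_sub_assoc, ← htail]
  exact add_le_add_right (Finset.sum_le_sum fun i _ ↦ sub_le_mul_log_div (hπ_nonneg _) hq) _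

lemma le_of_mul_log_add_sub_one_le {p x L ε : ℝ} (hp : 0 ≤ p) (hx : 0 < x) (hε : 0 ≤ ε)
    (hxε : ε < x * (Real.log x + L - 1)) (hpε : p * (Real.log p + L - 1) ≤ ε) : p ≤ x := by
  by_contra! hxp
  have hpos : 0 < Real.log x + L - 1 := pos_of_mul_pos_right (hε.trans_lt hxε) hx.le
  have hlog : Real.log x ≤ Real.log p := Real.log_le_log hx hxp.le
  nlinarith

lemma eventually_lt_div_mul_log_div_add_sub_one {ε c : ℝ} (hc : ε < c) :
    ∀ᶠ L in atTop, 0 < L ∧ ε < c / L * (Real.log (c / L) + L - 1) := by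
  have hx : Tendsto (fun L ↦ c / L) atTop (𝓝 0) := tendsto_const_nhds.div_atTop tendsto_id
  have hφ : Tendsto (fun L ↦ c + (c / L * Real.log (c / L) - c / L)) atTop (𝓝 c) := by
    simpa using (((Real.continuous_mul_log.sub continuous_id).tendsto 0).comp hx).const_add c
  filter_upwards [eventually_gt_atTop 0, hφ.eventually (lt_mem_nhds hc)] with L hL hεL
  refine ⟨hL, hεL.trans_eq ?_⟩
  field_simp
  ring

lemma tendsto_log_one_div_nhdsGT_zero :
    Tendsto (fun δ : ℝ ↦ Real.log (1 / δ)) (𝓝[>] 0) atTop := by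
  simpa only [one_div, Function.comp_def] using
    Real.tendsto_log_atTop.comp tendsto_inv_nhdsGT_zero

/-- **Forward-KL tolerance for a rare action, upper bound.**
For every `c > ε` there exists `δ₀ ∈ (0,1)`, depending only on `c` and `ε` and not
on `k`, such that for all `k ≥ 2` and all `δ ∈ (0, δ₀)`, every probability mass
function `π` on `{a⋆, a₁, …, a_k}` with `KL(π‖π0) ≤ ε` satisfies
`π(a⋆) ≤ c / log(1/δ)`. -/
theorem kl_rare_action_upper_bound
    (ε : ℝ) (hε : 0 < ε) (c : ℝ) (hc : ε < c) :
    ∃ δ₀ ∈ Set.Ioo (0 : ℝ) 1, ∀ k : ℕ, 2 ≤ k → ∀ δ ∈ Set.Ioo (0 : ℝ) δ₀,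
      ∀ π : Option (Fin k) → ℝ, IsPMFOn π → klDivFin π (rarePi0 k δ) ≤ ε →
        π none ≤ c / Real.log (1 / δ) := by
  obtain ⟨u, hu, hsub⟩ := (nhdsGT_basis (0 : ℝ)).mem_iff.mp
    (tendsto_log_one_div_nhdsGT_zero.eventually (eventually_lt_div_mul_log_div_add_sub_one hc))
  have hδ₀ : min u (1 / 2) < 1 := by linarith [min_le_right u (1 / 2)]
  refine ⟨min u (1 / 2), ⟨by positivity, hδ₀⟩, ?_⟩
  intro k hk δ ⟨hδ0, hδu⟩ π hπ hKL
  obtain ⟨hL, hxε⟩ := hsub ⟨hδ0, hδu.trans_le (min_le_left _ _)⟩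
  have hKL' := (le_klDivFin_rarePi0 (by omega) (hδu.trans hδ₀) hπ).trans hKL
  rw [mul_log_div_eq_mul_log_add_log_one_div _ hδ0.ne'] at hKL'
  refine le_of_mul_log_add_sub_one_le (hπ.1 none) (div_pos (hε.trans hc) hL) hε.le hxε ?_
  linarith
end
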